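/- arXiv:2410.20780 — 2 statements merged into one kernel-verified Lean document; each statement's English description precedes it below -/
import Mathlib

section
/- Let λ > 0, r > 0. If z ∈ (0,1) satisfies 2λz³ − 2λ(c+1)z² + (2λc − 1 − r)z + 1 = 0 for some c ∈ (0,1), then z satisfies (−(r+1) + √((1+r)² + 16λ)) / (8λ) ≤ z ≤ (r + 1 + 8λ − √((1+r)² + 16λr)) / (8λ). -/
theorem stmt2 (lam r c z : ℝ) (hlam : 0 < lam) (hr : 0 < r)
    (hz : z ∈ Set.Ioo (0:ℝ) 1) (hc : c ∈ Set.Ioo (0:ℝ) 1)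
    (hroot : 2*lam*z^3 - 2*lam*(c+1)*z^2 + (2*lam*c - 1 - r)*z + 1 = 0) :
    (-(r+1) + Real.sqrt ((1+r)^2 + 16*lam)) / (8*lam) ≤ z ∧
      z ≤ (r + 1 + 8*lam - Real.sqrt ((1+r)^2 + 16*lam*r)) / (8*lam) := by
  obtain ⟨hz0, hz1⟩ := hz
  obtain ⟨hc0, hc1⟩ := hc
  have h1z : 0 < 1 - z := by linarith
  have h1c : 0 < 1 - c := by linarith
  have h8 : (0:ℝ) < 8 * lam := by linarith
  -- lower quadratic: 4λz² + (1+r)z - 1 ≥ 0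
  have hg : 0 ≤ 4*lam*z^2 + (1+r)*z - 1 := by
    nlinarith [mul_pos hlam (mul_pos hz0 (mul_pos hz0 hz0)),
      mul_pos (mul_pos hlam h1c) (mul_pos hz0 hz0),
      mul_pos (mul_pos hlam hc0) hz0]
  -- upper quadratic: 4λ(1-z)² + (r+1)(1-z) - r ≥ 0
  have hh : 0 ≤ 4*lam*(1-z)^2 + (r+1)*(1-z) - r := by
    nlinarith [mul_pos (mul_pos hlam h1z) h1z,
      mul_pos (mul_pos hlam h1z) (mul_pos h1c hz0),
      mul_pos (mul_pos hlam h1z) (mul_pos h1z h1z)]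
  constructor
  · rw [div_le_iff₀ h8]
    have ht : (0:ℝ) ≤ 8*lam*z + (1+r) := by positivity
    have : Real.sqrt ((1+r)^2 + 16*lam) ≤ 8*lam*z + (1+r) := by
      have := Real.sqrt_le_sqrt (show (1+r)^2 + 16*lam ≤ (8*lam*z + (1+r))^2 by
        nlinarith)
      rwa [Real.sqrt_sq ht] at this
    linarith
  · rw [le_div_iff₀ h8]
    have ht : (0:ℝ) ≤ (r+1) + 8*lam*(1-z) := by positivity
    have : Real.sqrt ((1+r)^2 + 16*lam*r) ≤ (r+1) + 8*lam*(1-z) := by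
      have := Real.sqrt_le_sqrt (show (1+r)^2 + 16*lam*r ≤ ((r+1) + 8*lam*(1-z))^2 by
        nlinarith)
      rwa [Real.sqrt_sq ht] at this
    linarith
end

section
/- Let λ ≥ 0, r > 0, and suppose D ∈ (0,1) satisfies (−(r+1)+√((1+r)²+16λ))/(8λ) ≤ D ≤ (r+1+8λ−√((1+r)²+16λr))/(8λ) (interpreting the bounds by continuity when λ = 0). If δ ∈ (0,1/2) with 1/(1+r) ∈ (δ, 1−δ) and 0 ≤ λ ≤ 3δ/(16(1−δ)), then |D − 1/(1+r)| ≤ 4λ((1−δ)/δ)². -/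
lemma sqrt_aux (s l : ℝ) (hs : 0 < s) (hl : 0 ≤ l) (h : 2*l ≤ s^2) :
    s + 8*l/s - 32*l^2/s^3 ≤ Real.sqrt (s^2 + 16*l) := by
  rcases le_or_gt (s + 8*l/s - 32*l^2/s^3) 0 with h0 | h0
  · exact h0.trans (Real.sqrt_nonneg _)
  · rw [show s + 8*l/s - 32*l^2/s^3 = (s^4 + 8*l*s^2 - 32*l^2)/s^3 by field_simp] at *
    rw [Real.le_sqrt h0.le, div_pow, div_le_iff₀ (by positivity)]
    · nlinarith [mul_nonneg (pow_nonneg hl 3) (sub_nonneg.2 h)]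
    · positivity

set_option maxHeartbeats 1000000 in
/-- Root localization combined with √(1+x) ≥ 1 + x/2 − x²/8: the regularized optimal
discriminator value D is within 4λ((1−δ)/δ)² of 1/(1+r).  For λ = 0 the bounds are
interpreted by continuity, i.e. D = 1/(1+r). -/
theorem stmt4 (lam r D δ : ℝ) (hlam : 0 ≤ lam) (hr : 0 < r)
    (hD : D ∈ Set.Ioo (0:ℝ) 1)
    (hδ : δ ∈ Set.Ioo (0:ℝ) (1/2))
    (hratio : 1/(1+r) ∈ Set.Ioo δ (1-δ))
    (hlam2 : lam ≤ 3*δ/(16*(1-δ)))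
    (hpos : 0 < lam →
      (-(r+1) + Real.sqrt ((1+r)^2 + 16*lam)) / (8*lam) ≤ D ∧
      D ≤ (r + 1 + 8*lam - Real.sqrt ((1+r)^2 + 16*lam*r)) / (8*lam))
    (hzero : lam = 0 → D = 1/(1+r)) :
    |D - 1/(1+r)| ≤ 4*lam*((1-δ)/δ)^2 := by
  obtain ⟨hδ0, hδ2⟩ := hδ
  obtain ⟨hρ1, hρ2⟩ := hratio
  have hs : (1:ℝ) < 1 + r := by linarith
  have hs0 : (0:ℝ) < 1 + r := by linarith
  rcases eq_or_lt_of_le hlam with hl0 | hl0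
  · rw [hzero hl0.symm, ← hl0]
    simp
  · obtain ⟨hlow, hhigh⟩ := hpos hl0
    have hd1 : δ * (1+r) < 1 := (lt_div_iff₀ hs0).mp hρ1
    have hlam3 : lam < 3/16 := by
      have h1 : 3*δ/(16*(1-δ)) < 3/16 := by
        rw [div_lt_iff₀ (by linarith : (0:ℝ) < 16*(1-δ))]; linarith
      linarith
    have hK1 : (1:ℝ) < (1-δ)/δ := by rw [lt_div_iff₀ hδ0]; linarith
    have hrK : r < (1-δ)/δ := by
      rw [lt_div_iff₀ hδ0]; nlinarith
    have h8 : (0:ℝ) < 8*lam := by linarith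
    have haux1 : (1+r) + 8*lam/(1+r) - 32*lam^2/(1+r)^3
        ≤ Real.sqrt ((1+r)^2 + 16*lam) :=
      sqrt_aux (1+r) lam hs0 hlam (by nlinarith)
    have haux2 : (1+r) + 8*lam*r/(1+r) - 32*lam^2*r^2/(1+r)^3
        ≤ Real.sqrt ((1+r)^2 + 16*lam*r) := by
      have h := sqrt_aux (1+r) (lam*r) hs0 (by positivity)
        (by nlinarith [mul_le_mul_of_nonneg_right hlam3.le hr.le])
      have e1 : 8*(lam*r)/(1+r) = 8*lam*r/(1+r) := by ring
      have e2 : 32*(lam*r)^2/(1+r)^3 = 32*lam^2*r^2/(1+r)^3 := by ring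
      have e3 : (1+r)^2 + 16*(lam*r) = (1+r)^2 + 16*lam*r := by ring
      rw [e1, e2, e3] at h; exact h
    have hlow' : 1/(1+r) - 4*lam/(1+r)^3 ≤ D := by
      refine le_trans ?_ hlow
      rw [le_div_iff₀ h8]
      have e : (1/(1+r) - 4*lam/(1+r)^3) * (8*lam)
          = ((1+r) + 8*lam/(1+r) - 32*lam^2/(1+r)^3) - (1+r) := by
        field_simp; ring
      rw [e]; linarith
    have hhigh' : D ≤ 1/(1+r) + 4*lam*r^2/(1+r)^3 := by
      refine le_trans hhigh ?_
      rw [div_le_iff₀ h8]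
      have e : (1/(1+r) + 4*lam*r^2/(1+r)^3) * (8*lam)
          = (8*lam + (1+r)) - ((1+r) + 8*lam*r/(1+r) - 32*lam^2*r^2/(1+r)^3) := by
        field_simp; ring
      rw [e]; linarith
    have hK2 : (1:ℝ) ≤ ((1-δ)/δ)^2 := by nlinarith
    have hp3 : (1:ℝ) < (1+r)^3 := one_lt_pow₀ hs (by norm_num)
    rw [abs_le]
    constructor
    · have h4 : 4*lam/(1+r)^3 ≤ 4*lam := by
        rw [div_le_iff₀ (by positivity)]
        nlinarith [mul_le_mul_of_nonneg_left hp3.le (by linarith : (0:ℝ) ≤ 4*lam)]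
      have h5 : 4*lam ≤ 4*lam*((1-δ)/δ)^2 := by
        nlinarith [mul_le_mul_of_nonneg_left hK2 (by linarith : (0:ℝ) ≤ 4*lam)]
      linarith
    · have hr2 : r^2 ≤ ((1-δ)/δ)^2 := by nlinarith
      have h4 : 4*lam*r^2/(1+r)^3 ≤ 4*lam*r^2 := by
        rw [div_le_iff₀ (by positivity)]
        nlinarith [mul_nonneg hlam (sq_nonneg r)]
      have h5 : 4*lam*r^2 ≤ 4*lam*((1-δ)/δ)^2 := by
        nlinarith [mul_le_mul_of_nonneg_left hr2 (by linarith : (0:ℝ) ≤ 4*lam)]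
      linarith
end
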